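/- If G is an r-regular graph on n vertices (r ≥ 1) and 𝓛 is a coloring condition over a finite color set K, then the number of 𝓛-legal neighborhood colorings of G is at most N(r,𝓛)^(n/r), where N(r,𝓛) is the number of functions from [r] to K whose multiset image is in 𝓛. -/

import Mathlib

/-!
Let `A` be the set of legal colourings and let `φ` be uniform on `A`. Entropy is submodular, so
Shearer's lemma applies to the cover of `V` by the neighbourhoods `N(v)`, each vertex lying in
exactly `r` of them: `r H(φ) ≤ ∑ᵥ H(φ|N(v))`. Read through a bijection `N(v) ≃ [r]`, the restriction
`φ|N(v)` is a legal map `[r] → K`, so each term is at most `log N(r,𝓛)`, and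
`r log #A ≤ n log N(r,𝓛)`.
-/

open Finset Real

section ScaledEntropy

variable {α β γ δ : Type*} [DecidableEq β] [DecidableEq γ] [DecidableEq δ] {A : Finset α}

lemma card_fiber_pos (u : α → β) {a : α} (ha : a ∈ A) : (0 : ℝ) < #{b ∈ A | u b = u a} :=
  Nat.cast_pos.2 <| card_pos.2 ⟨a, mem_filter.2 ⟨ha, rfl⟩⟩

lemma sum_div_card_fiber (u : α → β) (F : β → ℝ) :
    ∑ a ∈ A, F (u a) / #{b ∈ A | u b = u a} = ∑ t ∈ A.image u, F t := by
  rw [sum_comp (fun t ↦ F t / #{b ∈ A | u b = t}) u]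
  refine sum_congr rfl fun t ht ↦ ?_
  obtain ⟨a, ha, rfl⟩ := mem_image.1 ht
  rw [nsmul_eq_mul, mul_div_cancel₀ _ (card_fiber_pos u ha).ne']

lemma sum_log_nonpos_of_sum_le_card {x : α → ℝ} (hx : ∀ a ∈ A, 0 < x a)
    (h : ∑ a ∈ A, x a ≤ #A) : ∑ a ∈ A, log (x a) ≤ 0 :=
  calc ∑ a ∈ A, log (x a) ≤ ∑ a ∈ A, (x a - 1) :=
        sum_le_sum fun a ha ↦ log_le_sub_one_of_pos (hx a ha)
    _ ≤ 0 := by rw [sum_sub_distrib, sum_const, nsmul_one]; linarith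

/-- `#A` times the Shannon entropy of `u a` for `a` uniformly distributed on `A`. -/
noncomputable def scaledEntropy (A : Finset α) (u : α → β) : ℝ :=
  ∑ a ∈ A, log (#A / #{b ∈ A | u b = u a})

lemma scaledEntropy_mono {u : α → β} {w : α → γ}
    (h : ∀ a ∈ A, ∀ b ∈ A, u b = u a → w b = w a) : scaledEntropy A w ≤ scaledEntropy A u := by
  refine sum_le_sum fun a ha ↦ log_le_log (div_pos ?_ (card_fiber_pos w ha)) ?_
  · exact Nat.cast_pos.2 (card_pos.2 ⟨a, ha⟩)
  refine div_le_div_of_nonneg_left (Nat.cast_nonneg _) (card_fiber_pos u ha) ?_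
  exact_mod_cast card_le_card fun b hb ↦ by
    rw [mem_filter] at hb ⊢; exact ⟨hb.1, h a ha b hb.1 hb.2⟩

lemma scaledEntropy_congr {u : α → β} {w : α → γ}
    (h : ∀ a ∈ A, ∀ b ∈ A, u b = u a ↔ w b = w a) : scaledEntropy A u = scaledEntropy A w :=
  le_antisymm (scaledEntropy_mono fun a ha b hb ↦ (h a ha b hb).2)
    (scaledEntropy_mono fun a ha b hb ↦ (h a ha b hb).1)

-- Gibbs' inequality: the ratios `#A / (#(A.image u) * #fibre)` have mean `1`.
lemma scaledEntropy_le_card_mul_log_card_image (A : Finset α) (u : α → β) :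
    scaledEntropy A u ≤ #A * log #(A.image u) := by
  rcases A.eq_empty_or_nonempty with rfl | hA
  · simp [scaledEntropy]
  have hA' : (0 : ℝ) < #A := Nat.cast_pos.2 hA.card_pos
  have hm : (0 : ℝ) < #(A.image u) := Nat.cast_pos.2 (hA.image u).card_pos
  have hsum : ∑ a ∈ A, #A / #{b ∈ A | u b = u a} / (#(A.image u) : ℝ) = #A := by
    have hinv := sum_div_card_fiber (A := A) u fun _ ↦ 1
    simp only [sum_const, nsmul_one] at hinv
    simp_rw [← sum_div, div_eq_mul_one_div (#A : ℝ), ← mul_sum, hinv,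
      mul_div_cancel_right₀ _ hm.ne']
  have key := sum_log_nonpos_of_sum_le_card
    (fun a ha ↦ div_pos (div_pos hA' (card_fiber_pos u ha)) hm) hsum.le
  have hlog : ∀ a ∈ A, log (#A / #{b ∈ A | u b = u a} / (#(A.image u) : ℝ)) =
      log (#A / #{b ∈ A | u b = u a}) - log #(A.image u) := fun a ha ↦
    log_div (div_pos hA' (card_fiber_pos u ha)).ne' hm.ne'
  rw [sum_congr rfl hlog, sum_sub_distrib, sum_const, nsmul_eq_mul] at key
  exact sub_nonpos.1 key

lemma card_fiber_eq_sum_card_fiber_prod (e : α → β) (f : α → γ) (z : β) :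
    #{b ∈ A | e b = z} = ∑ x ∈ A.image f, #{b ∈ A | (e b, f b) = (z, x)} := by
  rw [card_eq_sum_card_fiberwise (f := f) (t := A.image f)
    fun b hb ↦ mem_image_of_mem f (mem_filter.1 hb).1]
  simp only [filter_filter, Prod.mk.injEq]

/- The double counting behind submodularity: grouped by the value of `(e, f, g)` and extended to
all triples of values, the sum for fixed `e = z` factorises as `#{e = z} * #{e = z} / #{e = z}`. -/
lemma sum_card_fiber_ratio_le_card (e : α → β) (f : α → γ) (g : α → δ) :
    ∑ a ∈ A, (#{b ∈ A | (e b, f b) = (e a, f a)} * #{b ∈ A | (e b, g b) = (e a, g a)} : ℝ) /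
      (#{b ∈ A | (e b, f b, g b) = (e a, f a, g a)} * #{b ∈ A | e b = e a}) ≤ #A := by
  set F : β × γ × δ → ℝ := fun t ↦
    (#{b ∈ A | (e b, f b) = (t.1, t.2.1)} * #{b ∈ A | (e b, g b) = (t.1, t.2.2)} : ℝ) /
      #{b ∈ A | e b = t.1} with hF
  have himage : A.image (fun a ↦ (e a, f a, g a)) ⊆ A.image e ×ˢ A.image f ×ˢ A.image g :=
    image_subset_iff.2 fun a ha ↦ by simp only [mem_product]; exact
      ⟨mem_image_of_mem e ha, mem_image_of_mem f ha, mem_image_of_mem g ha⟩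
  calc _ = ∑ a ∈ A, F (e a, f a, g a) / #{b ∈ A | (e b, f b, g b) = (e a, f a, g a)} :=
        sum_congr rfl fun a _ ↦ div_mul_eq_div_div_swap _ _ _
    _ = ∑ t ∈ A.image (fun a ↦ (e a, f a, g a)), F t := sum_div_card_fiber _ F
    _ ≤ ∑ t ∈ A.image e ×ˢ A.image f ×ˢ A.image g, F t :=
        sum_le_sum_of_subset_of_nonneg himage fun t _ _ ↦ by positivity
    _ = ∑ z ∈ A.image e, (#{b ∈ A | e b = z} : ℝ) := by
        rw [sum_product]
        refine sum_congr rfl fun z hz ↦ ?_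
        obtain ⟨a, ha, rfl⟩ := mem_image.1 hz
        have hpos := card_fiber_pos e ha
        rw [sum_product, hF]
        calc _ = (∑ x ∈ A.image f, (#{b ∈ A | (e b, f b) = (e a, x)} : ℝ)) *
              (∑ y ∈ A.image g, (#{b ∈ A | (e b, g b) = (e a, y)} : ℝ)) /
                #{b ∈ A | e b = e a} := by
              rw [sum_mul_sum, sum_div]; simp_rw [sum_div]
          _ = _ := by
              rw [← Nat.cast_sum, ← Nat.cast_sum, ← card_fiber_eq_sum_card_fiber_prod,
                ← card_fiber_eq_sum_card_fiber_prod]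
              exact mul_div_cancel_right₀ _ hpos.ne'
    _ = #A := by exact_mod_cast (card_eq_sum_card_image e A).symm

lemma scaledEntropy_submodular (e : α → β) (f : α → γ) (g : α → δ) :
    scaledEntropy A (fun a ↦ (e a, f a, g a)) + scaledEntropy A e ≤
      scaledEntropy A (fun a ↦ (e a, f a)) + scaledEntropy A (fun a ↦ (e a, g a)) := by
  have hlog : ∀ a ∈ A, log (#A / #{b ∈ A | (e b, f b, g b) = (e a, f a, g a)}) +
      log (#A / #{b ∈ A | e b = e a}) -
      (log (#A / #{b ∈ A | (e b, f b) = (e a, f a)}) +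
        log (#A / #{b ∈ A | (e b, g b) = (e a, g a)})) =
      log ((#{b ∈ A | (e b, f b) = (e a, f a)} * #{b ∈ A | (e b, g b) = (e a, g a)} : ℝ) /
        (#{b ∈ A | (e b, f b, g b) = (e a, f a, g a)} * #{b ∈ A | e b = e a})) := by
    intro a ha
    have hA : (0 : ℝ) < #A := Nat.cast_pos.2 (card_pos.2 ⟨a, ha⟩)
    have h₁ := card_fiber_pos (fun a ↦ (e a, f a)) ha
    have h₂ := card_fiber_pos (fun a ↦ (e a, g a)) ha
    have h₃ := card_fiber_pos (fun a ↦ (e a, f a, g a)) ha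
    have h₄ := card_fiber_pos e ha
    rw [log_div (mul_pos h₁ h₂).ne' (mul_pos h₃ h₄).ne', log_mul h₁.ne' h₂.ne',
      log_mul h₃.ne' h₄.ne']
    simp only [log_div hA.ne', h₁.ne', h₂.ne', h₃.ne', h₄.ne', ne_eq, not_false_eq_true]
    ring
  have hpos : ∀ a ∈ A, (0 : ℝ) <
      #{b ∈ A | (e b, f b) = (e a, f a)} * #{b ∈ A | (e b, g b) = (e a, g a)} /
        (#{b ∈ A | (e b, f b, g b) = (e a, f a, g a)} * #{b ∈ A | e b = e a}) := fun a ha ↦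
    div_pos
      (mul_pos (card_fiber_pos (fun a ↦ (e a, f a)) ha) (card_fiber_pos (fun a ↦ (e a, g a)) ha))
      (mul_pos (card_fiber_pos (fun a ↦ (e a, f a, g a)) ha) (card_fiber_pos e ha))
  have key := sum_log_nonpos_of_sum_le_card hpos (sum_card_fiber_ratio_le_card e f g)
  rw [← sum_congr rfl hlog, sum_sub_distrib, sum_add_distrib, sum_add_distrib] at key
  unfold scaledEntropy
  linarith

end ScaledEntropy

lemma Finset.restrict_eq_restrict_iff {V K : Type*} {S : Finset V} {φ ψ : V → K} :
    S.restrict φ = S.restrict ψ ↔ ∀ v ∈ S, φ v = ψ v := by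
  simp [funext_iff]

section RestrictEntropy

variable {V K : Type*} [DecidableEq K]

noncomputable def restrictEntropy (A : Finset (V → K)) (S : Finset V) : ℝ :=
  scaledEntropy A S.restrict

variable (A : Finset (V → K))

lemma restrictEntropy_empty : restrictEntropy A ∅ = 0 := by
  refine sum_eq_zero fun a ha ↦ ?_
  rw [filter_true_of_mem fun b _ ↦ Subsingleton.elim _ _, div_self, log_one]
  exact Nat.cast_ne_zero.2 (card_ne_zero_of_mem ha)

lemma restrictEntropy_univ [Fintype V] : restrictEntropy A univ = #A * log #A := by
  have hfiber : ∀ a ∈ A, #{b ∈ A | univ.restrict b = univ.restrict a} = 1 := fun a ha ↦ by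
    rw [card_eq_one]
    refine ⟨a, eq_singleton_iff_unique_mem.2 ⟨mem_filter.2 ⟨ha, rfl⟩, fun b hb ↦ ?_⟩⟩
    exact funext fun v ↦ restrict_eq_restrict_iff.1 (mem_filter.1 hb).2 v (mem_univ v)
  simp only [restrictEntropy, scaledEntropy]
  rw [sum_congr rfl fun a ha ↦ by rw [hfiber a ha, Nat.cast_one, div_one], sum_const, nsmul_eq_mul]

lemma restrictEntropy_mono : Monotone (restrictEntropy A) := fun _ _ hST ↦
  scaledEntropy_mono fun _ _ _ _ h ↦
    restrict_eq_restrict_iff.2 fun v hv ↦ restrict_eq_restrict_iff.1 h v (hST hv)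

lemma restrictEntropy_submodular [DecidableEq V] (S T : Finset V) :
    restrictEntropy A (S ∪ T) + restrictEntropy A (S ∩ T) ≤
      restrictEntropy A S + restrictEntropy A T := by
  have h := scaledEntropy_submodular (A := A) (S ∩ T).restrict S.restrict T.restrict
  have hST : scaledEntropy A (fun a ↦ ((S ∩ T).restrict a, S.restrict a, T.restrict a)) =
      restrictEntropy A (S ∪ T) := scaledEntropy_congr fun a _ b _ ↦ by
    simp only [Prod.mk.injEq, restrict_eq_restrict_iff, mem_union, mem_inter]; grind
  have hS : scaledEntropy A (fun a ↦ ((S ∩ T).restrict a, S.restrict a)) =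
      restrictEntropy A S := scaledEntropy_congr fun a _ b _ ↦ by
    simp only [Prod.mk.injEq, restrict_eq_restrict_iff, mem_inter]; grind
  have hT : scaledEntropy A (fun a ↦ ((S ∩ T).restrict a, T.restrict a)) =
      restrictEntropy A T := scaledEntropy_congr fun a _ b _ ↦ by
    simp only [Prod.mk.injEq, restrict_eq_restrict_iff, mem_inter]; grind
  rwa [hST, hS, hT] at h

end RestrictEntropy

section SubmodularSetFunction

variable {V : Type*} [DecidableEq V] {h : Finset V → ℝ}

lemma insert_sub_le_insert_sub_of_submodular
    (h_sub : ∀ S T, h (S ∪ T) + h (S ∩ T) ≤ h S + h T) {W U : Finset V} (hWU : W ⊆ U)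
    {v : V} (hv : v ∉ U) : h (insert v U) - h U ≤ h (insert v W) - h W := by
  have := h_sub (insert v W) U
  rw [insert_union, union_eq_right.2 hWU, insert_inter_of_notMem hv, inter_eq_left.2 hWU] at this
  linarith

/-- Shearer's inequality. -/
theorem mul_le_sum_inter_of_submodular {ι : Type*} (h_empty : h ∅ = 0) (h_mono : Monotone h)
    (h_sub : ∀ S T, h (S ∪ T) + h (S ∩ T) ≤ h S + h T) (J : Finset ι) (S : ι → Finset V)
    {r : ℕ} (hcov : ∀ v, r ≤ #{j ∈ J | v ∈ S j}) (U : Finset V) :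
    r * h U ≤ ∑ j ∈ J, h (S j ∩ U) := by
  induction U using Finset.induction_on with
  | empty => simp [h_empty]
  | @insert v U hv ih =>
    set d := h (insert v U) - h U
    have hd : 0 ≤ d := sub_nonneg.2 (h_mono (subset_insert v U))
    have hstep : ∀ j ∈ J, h (S j ∩ U) + (if v ∈ S j then d else 0) ≤ h (S j ∩ insert v U) := by
      intro j _
      by_cases hvj : v ∈ S j
      · have := insert_sub_le_insert_sub_of_submodular h_sub (inter_subset_right (s₁ := S j)) hv
        rw [if_pos hvj, inter_insert_of_mem hvj]
        linarith
      · rw [if_neg hvj, inter_insert_of_notMem hvj, add_zero]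
    have hsum := sum_le_sum hstep
    rw [sum_add_distrib, ← sum_filter, sum_const, nsmul_eq_mul] at hsum
    have hr : (r : ℝ) * d ≤ #{j ∈ J | v ∈ S j} * d :=
      mul_le_mul_of_nonneg_right (Nat.cast_le.2 (hcov v)) hd
    calc (r : ℝ) * h (insert v U) = r * h U + r * d := by ring
      _ ≤ _ := by linarith

end SubmodularSetFunction

theorem card_pow_le_prod_card_image_restrict {V K ι : Type*} [Fintype V] [DecidableEq V]
    [DecidableEq K] {A : Finset (V → K)} (hA : A.Nonempty) (J : Finset ι) (S : ι → Finset V)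
    {r : ℕ} (hcov : ∀ v, r ≤ #{j ∈ J | v ∈ S j}) :
    #A ^ r ≤ ∏ j ∈ J, #(A.image (S j).restrict) := by
  have hA' : (0 : ℝ) < #A := Nat.cast_pos.2 hA.card_pos
  have himage : ∀ j ∈ J, (0 : ℝ) < #(A.image (S j).restrict) :=
    fun j _ ↦ Nat.cast_pos.2 (hA.image _).card_pos
  have hshearer := mul_le_sum_inter_of_submodular (restrictEntropy_empty A)
    (restrictEntropy_mono A) (restrictEntropy_submodular A) J S hcov univ
  simp only [inter_univ, restrictEntropy_univ] at hshearer
  have hbound : ∑ j ∈ J, restrictEntropy A (S j) ≤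
      #A * ∑ j ∈ J, log #(A.image (S j).restrict) := by
    rw [mul_sum]
    exact sum_le_sum fun j _ ↦ scaledEntropy_le_card_mul_log_card_image A _
  have hlog : log ((#A : ℝ) ^ r) ≤ log (∏ j ∈ J, (#(A.image (S j).restrict) : ℝ)) := by
    rw [log_pow, log_prod fun j hj ↦ (himage j hj).ne']
    refine le_of_mul_le_mul_left ?_ hA'
    linarith
  exact_mod_cast (log_le_log_iff (by positivity) (prod_pos himage)).1 hlog

lemma card_image_restrict_le_card_of_map_mem {V K : Type*} [Fintype K] [DecidableEq K] {r : ℕ}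
    {S : Finset V} (hS : #S = r) (𝓛 : Finset (Multiset K)) {A : Finset (V → K)}
    (hA : ∀ φ ∈ A, S.val.map φ ∈ 𝓛) :
    #(A.image S.restrict) ≤ #{f : Fin r → K | univ.val.map f ∈ 𝓛} := by
  set e := S.equivFinOfCardEq hS
  have hmap : ∀ φ : V → K, univ.val.map (S.restrict φ ∘ e.symm) = S.val.map φ := fun φ ↦ by
    rw [← Multiset.map_map, Multiset.map_univ_val_equiv, univ_eq_attach, attach_val]
    exact Multiset.attach_map_val' _ φ
  refine card_le_card_of_injOn (· ∘ e.symm) (fun ψ hψ ↦ ?_) fun ψ _ χ _ h ↦ ?_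
  · obtain ⟨φ, hφ, rfl⟩ := mem_image.1 (mem_coe.1 hψ)
    rw [coe_filter, Set.mem_ofPred_eq, hmap]
    exact ⟨mem_univ _, hA φ hφ⟩
  · simpa [Function.comp_assoc] using congrArg (· ∘ e) h

theorem le_rpow_div_of_pow_le {a b : ℝ} (ha : 0 ≤ a) (hb : 0 ≤ b) {r n : ℕ} (hr : r ≠ 0)
    (h : a ^ r ≤ b ^ n) : a ≤ b ^ ((n : ℝ) / r) :=
  calc a = (a ^ r) ^ (r⁻¹ : ℝ) := (pow_rpow_inv_natCast ha hr).symm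
    _ ≤ (b ^ n) ^ (r⁻¹ : ℝ) := rpow_le_rpow (pow_nonneg ha r) h (by positivity)
    _ = b ^ ((n : ℝ) / r) := by rw [← rpow_natCast, ← rpow_mul hb, div_eq_mul_inv]

/-- For an `r`-regular graph `G` on `n` vertices, the number of `𝓛`-legal (open)
neighborhood colorings of `G` is at most `N(r,𝓛)^(n/r)`. -/
theorem stmt2 {V K : Type*} [Fintype V] [Fintype K] (G : SimpleGraph V) [DecidableRel G.Adj]
    (r : ℕ) (hr : 1 ≤ r) (hreg : G.IsRegularOfDegree r) (𝓛 : Finset (Multiset K)) :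
    ({φ : V → K | ∀ v : V, (G.neighborFinset v).val.map φ ∈ 𝓛}.ncard : ℝ) ≤
      (({f : Fin r → K | Finset.univ.val.map f ∈ 𝓛}.ncard : ℝ)) ^
        ((Fintype.card V : ℝ) / r) := by
  classical
  simp only [← coe_filter_univ, Set.ncard_coe_finset]
  set A : Finset (V → K) := {φ | ∀ v : V, (G.neighborFinset v).val.map φ ∈ 𝓛}
  rcases A.eq_empty_or_nonempty with hA | hA
  · rw [hA, card_empty, Nat.cast_zero]
    positivity
  have hcov : ∀ v, r ≤ #{w ∈ univ | v ∈ G.neighborFinset w} := fun v ↦ by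
    simp only [SimpleGraph.mem_neighborFinset, G.adj_comm _ v, ← G.neighborFinset_eq_filter,
      G.card_neighborFinset_eq_degree, hreg v, le_refl]
  have hproj : ∀ v, #(A.image (G.neighborFinset v).restrict) ≤
      #{f : Fin r → K | univ.val.map f ∈ 𝓛} := fun v ↦
    card_image_restrict_le_card_of_map_mem (hreg v) 𝓛 fun φ hφ ↦ (mem_filter.1 hφ).2 v
  have hpow := (card_pow_le_prod_card_image_restrict hA univ (G.neighborFinset ·) hcov).trans
    (prod_le_pow_card _ _ _ fun v _ ↦ hproj v)
  exact le_rpow_div_of_pow_le (Nat.cast_nonneg _) (Nat.cast_nonneg _) (by omega)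
    (by exact_mod_cast hpow)
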